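/- arXiv:2401.12984 — 2 statements merged into one kernel-verified Lean document; each statement's English description precedes it below -/
import Mathlib

section
/- Let $n, s, k$ be positive integers with $s \ge 2$, $0 \le k \le n$, $n \ge 5k+6$ and $n \ge 2s+k$. If $s > 2$, then the spectral radius of the graph $K_s \vee ((s+k-1)K_1 \cup K_{n-2s-k+1})$ is strictly less than the spectral radius of the graph $K_2 \vee ((k+1)K_1 \cup K_{n-k-3})$. -/
open Classical in
/-- The adjacency matrix of a simple graph, with real entries. -/
noncomputable def adjMat {V : Type} [Fintype V] (G : SimpleGraph V) : Matrix V V ℝ :=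
  fun i j => if G.Adj i j then 1 else 0

/-- The largest real eigenvalue of a real matrix. -/
noncomputable def maxEig {V : Type} [Fintype V] (M : Matrix V V ℝ) : ℝ :=
  sSup {t : ℝ | ∃ x : V → ℝ, x ≠ 0 ∧ M.mulVec x = t • x}

/-- The spectral radius (largest adjacency eigenvalue) of a graph. -/
noncomputable def specRad {V : Type} [Fintype V] (G : SimpleGraph V) : ℝ :=
  maxEig (adjMat G)

/-- The signless Laplacian matrix `Q(G) = D(G) + A(G)`. -/
noncomputable def qMat {V : Type} [Fintype V] [DecidableEq V] (G : SimpleGraph V) :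
    Matrix V V ℝ :=
  Matrix.diagonal (fun v => ∑ w, adjMat G v w) + adjMat G

/-- The signless Laplacian spectral radius of a graph. -/
noncomputable def qRad {V : Type} [Fintype V] [DecidableEq V] (G : SimpleGraph V) : ℝ :=
  maxEig (qMat G)

/-- The graph `K_s ∨ (a K_1 ∪ K_{n-s-a})` on vertex set `Fin n`:
the first `s` vertices form a clique joined to everything, the next `a` vertices are
independent, and the last `n - s - a` vertices form a clique. -/
def modelA (n s a : ℕ) : SimpleGraph (Fin n) where
  Adj i j := i ≠ j ∧ ((i : ℕ) < s ∨ (j : ℕ) < s ∨ (s + a ≤ (i : ℕ) ∧ s + a ≤ (j : ℕ)))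
  symm := ⟨by rintro i j ⟨h1, h2⟩; exact ⟨h1.symm, by tauto⟩⟩
  loopless := ⟨fun i h => h.1 rfl⟩

/-- The graph `s K_1 ∨ (a K_1 ∪ K_{n-s-a})` on vertex set `Fin n`:
the first `s` vertices are independent but joined to everything else, the next `a`
vertices are independent, and the last `n - s - a` vertices form a clique. -/
def modelB (n s a : ℕ) : SimpleGraph (Fin n) where
  Adj i j := i ≠ j ∧ (((i : ℕ) < s ∧ ¬ (j : ℕ) < s) ∨ ((j : ℕ) < s ∧ ¬ (i : ℕ) < s) ∨
    (s + a ≤ (i : ℕ) ∧ s + a ≤ (j : ℕ)))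
  symm := ⟨by rintro i j ⟨h1, h2⟩; exact ⟨h1.symm, by tauto⟩⟩
  loopless := ⟨fun i h => h.1 rfl⟩

/-- `M` is a matching of `G`: a set of pairwise disjoint edges of `G`. -/
def IsMatchingIn {V : Type} (G : SimpleGraph V) (M : Finset (Sym2 V)) : Prop :=
  (↑M : Set (Sym2 V)) ⊆ G.edgeSet ∧
    ∀ e ∈ M, ∀ f ∈ M, e ≠ f → ∀ v : V, ¬(v ∈ e ∧ v ∈ f)

/-- `H` is an `S(k)`-factor of `G`: a spanning subgraph of `G` each of whose connected
components is isomorphic to a star `K_{1,m}` with `1 ≤ m ≤ k`. -/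
def IsSkFactor {V : Type} [Fintype V] (G H : SimpleGraph V) (k : ℕ) : Prop :=
  H ≤ G ∧ ∀ c : H.ConnectedComponent, ∃ m : ℕ, 1 ≤ m ∧ m ≤ k ∧
    Nonempty ((H.induce c.supp) ≃g completeBipartiteGraph Unit (Fin m))


/-!
The vertices of `modelA n σ α` split into three cells of twins, so an eigenvector for an
eigenvalue `t > max 0 (n - σ - α - 1)` is constant on the cells and `t` is a root of the cubic
`modelACubic n σ α`; conversely every positive root of that cubic is an eigenvalue.

Let `p₁`, `p₂` be the cubics of the two graphs and `ρ₁` the spectral radius of the first one.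
Beyond `n - k - 2` we have `p₂ < p₁`, so `p₂ < 0` at `θ = max ρ₁ (n - k - 2)`: either `θ = ρ₁` is a
root of `p₁`, or `θ = n - k - 2` and we evaluate. As `p₂ > 0` from `n` on, `p₂` has a root beyond
`θ ≥ ρ₁`, and that root is an eigenvalue of the second graph.
-/

open Finset Matrix

section Eigenvalues

variable {V : Type} [Fintype V]

lemma finite_setOf_mulVec_eq_smul (M : Matrix V V ℝ) :
    {t : ℝ | ∃ x : V → ℝ, x ≠ 0 ∧ M *ᵥ x = t • x}.Finite := by
  classical
  refine (Module.End.finite_hasEigenvalue (Matrix.toLin' M)).subset ?_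
  rintro t ⟨x, hx0, hx⟩
  exact Module.End.hasEigenvalue_of_hasEigenvector
    (Module.End.hasEigenvector_iff.mpr ⟨Module.End.mem_eigenspace_iff.mpr hx, hx0⟩)

lemma le_maxEig {M : Matrix V V ℝ} {t : ℝ} (h : ∃ x : V → ℝ, x ≠ 0 ∧ M *ᵥ x = t • x) :
    t ≤ maxEig M :=
  le_csSup (finite_setOf_mulVec_eq_smul M).bddAbove h

lemma exists_mulVec_eq_maxEig_smul {M : Matrix V V ℝ} (h : 0 < maxEig M) :
    ∃ x : V → ℝ, x ≠ 0 ∧ M *ᵥ x = maxEig M • x := by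
  have hne : {t : ℝ | ∃ x : V → ℝ, x ≠ 0 ∧ M *ᵥ x = t • x}.Nonempty := by
    by_contra hemp
    rw [maxEig, Set.not_nonempty_iff_eq_empty.mp hemp, Real.sSup_empty] at h
    exact h.false
  exact hne.csSup_mem (finite_setOf_mulVec_eq_smul M)

lemma eq_of_forall_adj_iff {G : SimpleGraph V} {x : V → ℝ} {t : ℝ} (ht : 0 < t)
    (hx : adjMat G *ᵥ x = t • x) {u v : V}
    (htwin : ∀ w, w ≠ u → w ≠ v → (G.Adj u w ↔ G.Adj v w)) : x u = x v := by
  classical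
  by_cases huv : u = v
  · rw [huv]
  have hu : ∑ w, adjMat G u w * x w = t * x u := congrFun hx u
  have hv : ∑ w, adjMat G v w * x w = t * x v := congrFun hx v
  have hdiff : ∑ w, (adjMat G u w - adjMat G v w) * x w = adjMat G u v * (x v - x u) := by
    rw [Fintype.sum_eq_add u v huv fun w ⟨hwu, hwv⟩ => by simp [adjMat, htwin w hwu hwv]]
    simp only [adjMat, G.loopless.irrefl, G.adj_comm v u, if_false]
    ring
  simp only [sub_mul, sum_sub_distrib, hu, hv] at hdiff
  have hpos : 0 < t + adjMat G u v := by
    have : 0 ≤ adjMat G u v := by unfold adjMat; split_ifs <;> norm_num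
    linarith
  have key : (t + adjMat G u v) * (x u - x v) = 0 := by linear_combination hdiff
  linarith [(mul_eq_zero.mp key).resolve_left hpos.ne']

end Eigenvalues

section ModelA

variable {n σ α : ℕ}

def blockVec (σ α : ℕ) (y₀ y₁ y₂ : ℝ) (j : Fin n) : ℝ :=
  if (j : ℕ) < σ then y₀ else if (j : ℕ) < σ + α then y₁ else y₂

lemma sum_blockVec (hn : σ + α ≤ n) (y₀ y₁ y₂ : ℝ) :
    ∑ j : Fin n, blockVec σ α y₀ y₁ y₂ j = σ * y₀ + α * y₁ + ((n : ℝ) - σ - α) * y₂ := by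
  obtain ⟨m, rfl⟩ := Nat.exists_eq_add_of_le hn
  unfold blockVec
  rw [Fin.sum_univ_eq_sum_range (fun j => if j < σ then y₀ else if j < σ + α then y₁ else y₂),
    sum_range_add, sum_range_add]
  have h₂ (x : ℕ) : ¬ σ + α + x < σ := by omega
  rw [show ((σ + α + m : ℕ) : ℝ) - σ - α = m by push_cast; ring]
  simp [sum_ite_of_true, h₂]

lemma modelA_adj_iff_of_sameCell {i j : Fin n} (h₀ : (i : ℕ) < σ ↔ (j : ℕ) < σ)
    (h₁ : (i : ℕ) < σ + α ↔ (j : ℕ) < σ + α) (w : Fin n) (hwi : w ≠ i) (hwj : w ≠ j) :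
    (modelA n σ α).Adj i w ↔ (modelA n σ α).Adj j w := by
  simp only [modelA, ne_eq, Fin.ext_iff] at hwi hwj ⊢
  omega

lemma adjMat_modelA_mulVec_blockVec (hn : σ + α ≤ n) (y₀ y₁ y₂ : ℝ) :
    adjMat (modelA n σ α) *ᵥ blockVec σ α y₀ y₁ y₂ =
      blockVec σ α ((σ - 1) * y₀ + α * y₁ + ((n : ℝ) - σ - α) * y₂) (σ * y₀)
        (σ * y₀ + ((n : ℝ) - σ - α - 1) * y₂) := by
  classical
  funext i
  set w : Fin n → ℝ := blockVec σ α y₀ (if (i : ℕ) < σ then y₁ else 0)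
    (if (i : ℕ) < σ ∨ σ + α ≤ i then y₂ else 0)
  have hrow (j : Fin n) :
      adjMat (modelA n σ α) i j * blockVec σ α y₀ y₁ y₂ j = w j - if j = i then w i else 0 := by
    simp only [adjMat, modelA, blockVec, w, ne_eq, Fin.ext_iff]
    split_ifs <;> first | omega | ring
  calc (adjMat (modelA n σ α) *ᵥ blockVec σ α y₀ y₁ y₂) i
      = ∑ j, (w j - if j = i then w i else 0) := by
        rw [mulVec, dotProduct]; exact sum_congr rfl fun j _ => hrow j
    _ = _ := by
      rw [sum_sub_distrib, sum_blockVec hn, sum_ite_eq']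
      simp only [w, blockVec, mem_univ, if_true]
      split_ifs <;> first | omega | ring

lemma eq_blockVec_of_mulVec_eq_smul (hσ : 0 < σ) (hα : 0 < α) (hn : σ + α < n) {t : ℝ}
    (ht : 0 < t) {x : Fin n → ℝ} (hx : adjMat (modelA n σ α) *ᵥ x = t • x) :
    x = blockVec σ α (x ⟨0, by omega⟩) (x ⟨σ, by omega⟩) (x ⟨σ + α, hn⟩) := by
  funext j
  unfold blockVec
  split_ifs <;>
    exact eq_of_forall_adj_iff ht hx (modelA_adj_iff_of_sameCell (by simp; omega) (by simp; omega))

/-- The characteristic polynomial of the quotient matrix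
`!![σ - 1, α, m; σ, 0, 0; σ, 0, m - 1]` (with `m = n - σ - α`) of the partition of `modelA n σ α`
into its three cells, cf. `adjMat_modelA_mulVec_blockVec`. -/
def modelACubic (n σ α : ℕ) (t : ℝ) : ℝ :=
  (t - ((n : ℝ) - σ - α) + 1) * (t ^ 2 - ((σ : ℝ) - 1) * t - σ * α) - σ * ((n : ℝ) - σ - α) * t

lemma modelACubic_eq_zero_of_mulVec_eq_smul (hσ : 0 < σ) (hα : 0 < α) (hn : σ + α < n)
    {t : ℝ} (ht : 0 < t) (htm : (n : ℝ) - σ - α - 1 < t) {x : Fin n → ℝ} (hx0 : x ≠ 0)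
    (hx : adjMat (modelA n σ α) *ᵥ x = t • x) : modelACubic n σ α t = 0 := by
  have hxb := eq_blockVec_of_mulVec_eq_smul hσ hα hn ht hx
  set y₀ := x ⟨0, by omega⟩
  set y₁ := x ⟨σ, by omega⟩
  set y₂ := x ⟨σ + α, hn⟩
  rw [hxb, adjMat_modelA_mulVec_blockVec hn.le] at hx
  have e₀ := congrFun hx ⟨0, by omega⟩
  have e₁ := congrFun hx ⟨σ, by omega⟩
  have e₂ := congrFun hx ⟨σ + α, hn⟩
  simp only [blockVec, Pi.smul_apply, smul_eq_mul] at e₀ e₁ e₂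
  have h₂ : ¬ σ + α < σ := by omega
  simp only [hσ, lt_irrefl, lt_add_iff_pos_right, hα, h₂, if_true, if_false] at e₀ e₁ e₂
  have hy₀ : y₀ ≠ 0 := by
    intro h0
    have hy₁ : y₁ = 0 := by
      rw [h0, mul_zero, eq_comm, mul_eq_zero] at e₁
      exact e₁.resolve_left ht.ne'
    have hy₂ : y₂ = 0 := by
      have : (t - ((n : ℝ) - σ - α - 1)) * y₂ = 0 := by rw [h0] at e₂; linear_combination -e₂
      exact (mul_eq_zero.mp this).resolve_left (by linarith)
    exact hx0 (by rw [hxb, h0, hy₁, hy₂]; funext j; simp [blockVec])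
  have key : modelACubic n σ α t * y₀ = 0 := by
    unfold modelACubic
    linear_combination (-(t * (t - ((n : ℝ) - σ - α) + 1))) * e₀
      + (-(α * (t - ((n : ℝ) - σ - α) + 1))) * e₁ + (-(((n : ℝ) - σ - α) * t)) * e₂
  exact (mul_eq_zero.mp key).resolve_right hy₀

lemma modelACubic_specRad_eq_zero (hσ : 0 < σ) (hα : 0 < α) (hn : σ + α < n)
    (hρ₀ : 0 < specRad (modelA n σ α)) (hρ : (n : ℝ) - σ - α - 1 < specRad (modelA n σ α)) :
    modelACubic n σ α (specRad (modelA n σ α)) = 0 :=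
  have ⟨_, hx0, hx⟩ := exists_mulVec_eq_maxEig_smul hρ₀
  modelACubic_eq_zero_of_mulVec_eq_smul hσ hα hn hρ₀ hρ hx0 hx

lemma exists_mulVec_eq_smul_of_modelACubic_eq_zero (hσ : 0 < σ) (hn : σ + α < n) {t : ℝ}
    (ht : 0 < t) (hp : modelACubic n σ α t = 0) :
    ∃ x : Fin n → ℝ, x ≠ 0 ∧ adjMat (modelA n σ α) *ᵥ x = t • x := by
  set m : ℝ := (n : ℝ) - σ - α
  refine ⟨blockVec σ α (t * (t - m + 1)) (σ * (t - m + 1)) (σ * t), fun h => ?_, ?_⟩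
  · have h₂ : ¬ σ + α < σ := by omega
    have := congrFun h ⟨σ + α, hn⟩
    simp only [blockVec, h₂, lt_irrefl, if_false, Pi.zero_apply] at this
    exact (mul_pos (by exact_mod_cast hσ) ht).ne' this
  · rw [adjMat_modelA_mulVec_blockVec hn.le]
    funext j
    unfold modelACubic at hp
    simp only [blockVec, Pi.smul_apply, smul_eq_mul]
    split_ifs
    · linear_combination -hp
    · ring
    · ring

end ModelA

lemma exists_gt_eq_zero_of_continuous {f : ℝ → ℝ} (hf : Continuous f) {a b : ℝ} (ha : f a < 0)
    (hb : ∀ x, b ≤ x → 0 < f x) : ∃ c, a < c ∧ f c = 0 := by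
  obtain ⟨c, hc, hfc⟩ := intermediate_value_Ioc (le_max_left a b) hf.continuousOn
    ⟨ha, (hb _ (le_max_right a b)).le⟩
  exact ⟨c, hc.1, hfc⟩

section Comparison

variable {n s k : ℕ}

lemma modelACubic_sub_modelACubic (hs : 0 < s) (t : ℝ) :
    modelACubic n s (s + k - 1) t - modelACubic n 2 (k + 1) t
      = (s - 2) * (t ^ 2 - (s + k) * t) + s * (s + k - 1) * ((n : ℝ) - 2 * s - k)
        - 2 * (k + 1) * ((n : ℝ) - k - 4) := by
  unfold modelACubic
  rw [Nat.cast_sub (by omega)]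
  push_cast
  ring

lemma modelACubic_two_lt (h₁ : 5 * k + 6 ≤ n) (h₂ : 2 * s + k ≤ n) (hs : 2 < s) {t : ℝ}
    (ht : (n : ℝ) - k - 2 < t) : modelACubic n 2 (k + 1) t < modelACubic n s (s + k - 1) t := by
  have hN : 5 * (k : ℝ) + 6 ≤ n := by exact_mod_cast h₁
  have hS : 2 * (s : ℝ) + k ≤ n := by exact_mod_cast h₂
  have hS3 : (3 : ℝ) ≤ s := by exact_mod_cast hs
  have hK : (0 : ℝ) ≤ k := k.cast_nonneg
  have hconst : 2 * (k + 1) * ((n : ℝ) - k - 4)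
      ≤ (s - 2) * (((n : ℝ) - k - 2) * ((n : ℝ) - s - 2 * k - 2))
        + s * (s + k - 1) * ((n : ℝ) - 2 * s - k) := by
    have ha : (0 : ℝ) ≤ s - 3 := by linarith
    have hb : (0 : ℝ) ≤ n - 2 * s - k := by linarith
    have hc : (0 : ℝ) ≤ n - 5 * k - 6 := by linarith
    -- equality at `(n, s, k) = (6, 3, 0)`: strictness has to come from `hmono`
    nlinarith [mul_nonneg (mul_nonneg ha hb) hb, mul_nonneg (mul_nonneg ha ha) hK]
  have hmono : ((n : ℝ) - k - 2) * ((n : ℝ) - s - 2 * k - 2) < t * (t - (s + k)) := by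
    have h0 : (0 : ℝ) < n - s - 2 * k - 2 := by linarith
    nlinarith [mul_lt_mul_of_pos_right ht h0]
  have hdiff := modelACubic_sub_modelACubic (n := n) (k := k) (by omega : 0 < s) t
  nlinarith [mul_lt_mul_of_pos_left hmono (by linarith : (0 : ℝ) < s - 2)]

lemma modelACubic_two_neg : modelACubic n 2 (k + 1) ((n : ℝ) - k - 2) < 0 := by
  unfold modelACubic
  push_cast
  nlinarith [k.cast_nonneg (α := ℝ)]

lemma modelACubic_two_pos (h₁ : 5 * k + 6 ≤ n) {t : ℝ} (ht : (n : ℝ) ≤ t) :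
    0 < modelACubic n 2 (k + 1) t := by
  have hN : 5 * (k : ℝ) + 6 ≤ n := by exact_mod_cast h₁
  have hK : (0 : ℝ) ≤ k := k.cast_nonneg
  unfold modelACubic
  push_cast
  nlinarith [sq_nonneg t, mul_nonneg hK (sub_nonneg.mpr ht), sq_nonneg (t - n)]


lemma modelACubic_two_max_specRad_neg (h₁ : 5 * k + 6 ≤ n) (h₂ : 2 * s + k ≤ n) (hs : 2 < s) :
    modelACubic n 2 (k + 1) (max (specRad (modelA n s (s + k - 1))) ((n : ℝ) - k - 2)) < 0 := by
  rcases le_or_gt (specRad (modelA n s (s + k - 1))) ((n : ℝ) - k - 2) with hρ | hρ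
  · rw [max_eq_right hρ]
    exact modelACubic_two_neg
  · have hρ₀ : 0 < specRad (modelA n s (s + k - 1)) := by
      have : (k : ℝ) + 2 ≤ n := by exact_mod_cast (by omega : k + 2 ≤ n)
      linarith
    have hρ' : (n : ℝ) - s - ((s + k - 1 : ℕ) : ℝ) - 1 < specRad (modelA n s (s + k - 1)) := by
      have : (2 : ℝ) ≤ s := by exact_mod_cast hs.le
      rw [Nat.cast_sub (by omega)]; push_cast; linarith
    have hroot := modelACubic_specRad_eq_zero (by omega) (by omega) (by omega) hρ₀ hρ'
    rw [max_eq_left hρ.le]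
    linarith [modelACubic_two_lt h₁ h₂ hs hρ]

end Comparison

theorem stmt_9_general (n s k : ℕ) (h1 : 5 * k + 6 ≤ n) (h2 : 2 * s + k ≤ n) (hs2 : 2 < s) :
    specRad (modelA n s (s + k - 1)) < specRad (modelA n 2 (k + 1)) := by
  set θ := max (specRad (modelA n s (s + k - 1))) ((n : ℝ) - k - 2)
  obtain ⟨t, hθt, ht⟩ := exists_gt_eq_zero_of_continuous (by unfold modelACubic; fun_prop)
    (modelACubic_two_max_specRad_neg h1 h2 hs2) fun x hx => modelACubic_two_pos h1 hx
  have ht₀ : 0 < t := by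
    have : (k : ℝ) + 2 ≤ n := by exact_mod_cast (by omega : k + 2 ≤ n)
    linarith [le_max_right (specRad (modelA n s (s + k - 1))) ((n : ℝ) - k - 2)]
  calc specRad (modelA n s (s + k - 1)) ≤ θ := le_max_left _ _
    _ < t := hθt
    _ ≤ specRad (modelA n 2 (k + 1)) :=
      le_maxEig (exists_mulVec_eq_smul_of_modelACubic_eq_zero (by omega) (by omega) ht₀ ht)

/-- Lemma: for `n ≥ max{5k+6, 2s+k}`, `0 ≤ k ≤ n` and `s > 2`,
`ρ(K_s ∨ ((s+k-1)K_1 ∪ K_{n-2s-k+1})) < ρ(K_2 ∨ ((k+1)K_1 ∪ K_{n-k-3}))`. -/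
theorem stmt_9 (n s k : ℕ) (hn : 1 ≤ n) (hs : 2 ≤ s) (hkn : k ≤ n)
    (h1 : 5 * k + 6 ≤ n) (h2 : 2 * s + k ≤ n) (hs2 : 2 < s) :
    specRad (modelA n s (s + k - 1)) < specRad (modelA n 2 (k + 1)) :=
  stmt_9_general n s k h1 h2 hs2
end

section
/- Let $n, s, k$ be positive integers with $k \ge 2$, $s \ge 1$, $n \ge 2k + 4$ and $n \ge (k+1)s + 1$. If $s > 1$, then the signless Laplacian spectral radius of the graph $sK_1 \vee ((ks+1)K_1 \cup K_{n-(k+1)s-1})$ is at most the signless Laplacian spectral radius of the graph $K_1 \vee ((k+1)K_1 \cup K_{n-k-2})$ (the $s=1$ member of this family). -/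
/-!
Both sides are compared with `2 (n - k - 2)`. If `Q(G) x = t x`, let `u` be a vertex where `x`
is largest (after replacing `x` by `-x`, `x u > 0`) and `v` a neighbour of `u` where `x` is
largest among the neighbours of `u`; adding the eigenvalue equations at `u` and `v` gives
`t (x u + x v) ≤ (d u + d v) (x u + x v)`, so `q(G) ≤ max_{uv ∈ E} (d u + d v)`, and in
`sK_1 ∨ ((ks+1)K_1 ∪ K_{n-(k+1)s-1})` every edge has `d u + d v ≤ 2 (n - k - 2)` as `s ≥ 2`.
Conversely `K_1 ∨ ((k+1)K_1 ∪ K_{n-k-2})` contains a clique on `n - k - 1` vertices, and the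
Rayleigh quotient of its indicator vector is at least `2 (n - k - 2)`.
-/

open Finset Matrix
open scoped RealInnerProductSpace

section Rayleigh

variable {ι : Type} [Fintype ι] {M : Matrix ι ι ℝ}

lemma dotProduct_self_pos {x : ι → ℝ} (hx : x ≠ 0) : 0 < x ⬝ᵥ x := by
  simpa using dotProduct_self_star_pos_iff.2 hx

variable [DecidableEq ι]

lemma Matrix.IsHermitian.dotProduct_mulVec_le (hM : M.IsHermitian) {c : ℝ}
    (hc : ∀ i, hM.eigenvalues i ≤ c) (x : ι → ℝ) :
    x ⬝ᵥ M *ᵥ x ≤ c * (x ⬝ᵥ x) := by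
  let b := hM.eigenvectorBasis
  have hdot (y z : EuclideanSpace ℝ ι) : ⟪y, z⟫ = y.ofLp ⬝ᵥ z.ofLp := by
    simp [EuclideanSpace.inner_eq_star_dotProduct, dotProduct_comm]
  have hcoef (i : ι) :
      ⟪b i, WithLp.toLp 2 (M *ᵥ x)⟫ = hM.eigenvalues i * ⟪b i, WithLp.toLp 2 x⟫ := by
    rw [hdot, hdot, dotProduct_mulVec, ← mulVec_transpose, (isHermitian_iff_isSymm.1 hM).eq,
      hM.mulVec_eigenvectorBasis, smul_dotProduct, smul_eq_mul]
  calc x ⬝ᵥ M *ᵥ x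
        = ∑ i, ⟪WithLp.toLp 2 x, b i⟫ * ⟪b i, WithLp.toLp 2 (M *ᵥ x)⟫ := by
        rw [b.sum_inner_mul_inner, hdot]
    _ = ∑ i, hM.eigenvalues i * ⟪b i, WithLp.toLp 2 x⟫ ^ 2 := by
        simp only [hcoef, real_inner_comm (b _)]; congr! 1; ring
    _ ≤ ∑ i, c * ⟪b i, WithLp.toLp 2 x⟫ ^ 2 := by gcongr; exact hc _
    _ = c * (x ⬝ᵥ x) := by
        rw [← mul_sum, ← hdot, ← b.sum_inner_mul_inner]
        simp only [real_inner_comm (b _), sq]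

lemma Matrix.IsHermitian.maxEig_eq [Nonempty ι] (hM : M.IsHermitian) :
    maxEig M = univ.sup' univ_nonempty hM.eigenvalues := by
  refine IsGreatest.csSup_eq ⟨?_, ?_⟩
  · obtain ⟨i, -, hi⟩ := exists_mem_eq_sup' univ_nonempty hM.eigenvalues
    refine ⟨hM.eigenvectorBasis i, fun h => ?_, hi ▸ hM.mulVec_eigenvectorBasis i⟩
    exact hM.eigenvectorBasis.orthonormal.ne_zero i (WithLp.ofLp_injective 2 h)
  · rintro t ⟨x, hx, hMx⟩
    refine le_of_mul_le_mul_right ?_ (dotProduct_self_pos hx)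
    calc t * (x ⬝ᵥ x) = x ⬝ᵥ M *ᵥ x := by rw [hMx, dotProduct_smul, smul_eq_mul]
      _ ≤ _ := hM.dotProduct_mulVec_le (fun i => le_sup' _ (mem_univ i)) x

lemma Matrix.IsHermitian.le_maxEig (hM : M.IsHermitian) {x : ι → ℝ} (hx : x ≠ 0) {c : ℝ}
    (h : c * (x ⬝ᵥ x) ≤ x ⬝ᵥ M *ᵥ x) : c ≤ maxEig M := by
  obtain ⟨i, -⟩ := Function.ne_iff.1 hx
  have : Nonempty ι := ⟨i⟩
  rw [hM.maxEig_eq]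
  refine le_of_mul_le_mul_right (h.trans ?_) (dotProduct_self_pos hx)
  exact hM.dotProduct_mulVec_le (fun i => le_sup' _ (mem_univ i)) x

end Rayleigh

section SignlessLaplacian

variable {V : Type} [Fintype V] (G : SimpleGraph V) [DecidableRel G.Adj]

lemma adjMat_eq_adjMatrix : adjMat G = G.adjMatrix ℝ := by
  ext i j
  simp only [adjMat, SimpleGraph.adjMatrix_apply]
  congr

variable [DecidableEq V]

lemma qMat_eq : qMat G = diagonal (fun v => (G.degree v : ℝ)) + G.adjMatrix ℝ := by
  simp [qMat, adjMat_eq_adjMatrix, ← G.neighborFinset_eq_filter]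

lemma qMat_isHermitian : (qMat G).IsHermitian := by
  rw [qMat_eq]
  exact (isHermitian_diagonal _).add (isHermitian_iff_isSymm.2 (G.isSymm_adjMatrix))

lemma qMat_mulVec_apply (x : V → ℝ) (v : V) :
    (qMat G *ᵥ x) v = G.degree v * x v + ∑ w ∈ G.neighborFinset v, x w := by
  simp [qMat_eq, add_mulVec, mulVec_diagonal]

lemma eigenvalue_qMat_le {C : ℕ} (hC : ∀ u v, G.Adj u v → G.degree u + G.degree v ≤ C)
    {t : ℝ} {x : V → ℝ} (hx : x ≠ 0) (hev : qMat G *ᵥ x = t • x) : t ≤ C := by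
  wlog hpos : ∃ w, 0 < x w generalizing x
  · simp only [not_exists, not_lt] at hpos
    obtain ⟨w, hw⟩ := Function.ne_iff.1 hx
    refine this (neg_ne_zero.2 hx) (by rw [mulVec_neg, hev, smul_neg]) ⟨w, ?_⟩
    simpa using (hpos w).lt_of_ne hw
  have heq (w : V) : t * x w = G.degree w * x w + ∑ z ∈ G.neighborFinset w, x z := by
    rw [← qMat_mulVec_apply, hev, Pi.smul_apply, smul_eq_mul]
  have hsum (w : V) {c : ℝ} (hc : ∀ z ∈ G.neighborFinset w, x z ≤ c) :
      ∑ z ∈ G.neighborFinset w, x z ≤ G.degree w * c := by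
    simpa [G.card_neighborFinset_eq_degree] using sum_le_card_nsmul _ _ _ hc
  obtain ⟨w, hw⟩ := hpos
  obtain ⟨u, -, hu⟩ := exists_max_image univ x ⟨w, mem_univ w⟩
  have hxu : 0 < x u := hw.trans_le (hu w (mem_univ w))
  rcases (G.neighborFinset u).eq_empty_or_nonempty with hN | hN
  · have : t * x u = 0 := by
      rw [heq, hN, ← G.card_neighborFinset_eq_degree, hN]
      simp
    rw [(mul_eq_zero.1 this).resolve_right hxu.ne']
    exact C.cast_nonneg
  obtain ⟨v, hv, hvmax⟩ := exists_max_image _ x hN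
  have hCuv : (G.degree u + G.degree v : ℝ) ≤ C := by
    exact_mod_cast hC u v ((G.mem_neighborFinset u v).1 hv)
  have hu' : t * x u ≤ G.degree u * x u + G.degree u * x v := by
    rw [heq]
    gcongr
    exact hsum u hvmax
  rcases le_or_gt (x v) 0 with hv0 | hv0
  · have : G.degree u * x v ≤ 0 := mul_nonpos_of_nonneg_of_nonpos (Nat.cast_nonneg _) hv0
    have : t ≤ G.degree u := le_of_mul_le_mul_right (by linarith) hxu
    linarith [(G.degree v).cast_nonneg (α := ℝ)]
  · have hv' : t * x v ≤ G.degree v * x v + G.degree v * x u := by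
      rw [heq]
      gcongr
      exact hsum v fun z _ => hu z (mem_univ z)
    have : t * (x u + x v) ≤ (G.degree u + G.degree v) * (x u + x v) := by linarith
    exact (le_of_mul_le_mul_right this (by linarith)).trans hCuv

lemma qRad_le_of_degree_add_degree_le {C : ℕ}
    (hC : ∀ u v, G.Adj u v → G.degree u + G.degree v ≤ C) : qRad G ≤ C :=
  Real.sSup_le (fun _ ⟨_, hx, hev⟩ => eigenvalue_qMat_le G hC hx hev) C.cast_nonneg

lemma two_mul_card_sub_one_le_qRad {S : Finset V} (hS : G.IsClique (S : Set V))
    (hne : S.Nonempty) : ((2 * (#S - 1) : ℕ) : ℝ) ≤ qRad G := by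
  let x : V → ℝ := fun v => if v ∈ S then 1 else 0
  have hx : x ≠ 0 := by
    obtain ⟨v, hv⟩ := hne
    exact Function.ne_iff.2 ⟨v, by simp [x, hv]⟩
  have hdot (y : V → ℝ) : x ⬝ᵥ y = ∑ v ∈ S, y v := by
    simp [x, dotProduct, ite_mul]
  have hrow (u : V) (hu : u ∈ S) :
      2 * (#S - 1) ≤ G.degree u + #{w ∈ G.neighborFinset u | w ∈ S} := by
    have hsub : S.erase u ⊆ {w ∈ G.neighborFinset u | w ∈ S} := fun w hw => by
      obtain ⟨hwu, hw⟩ := mem_erase.1 hw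
      simpa [hw] using hS hu hw hwu.symm
    have h1 := card_le_card hsub
    have h2 := card_le_card (hsub.trans (filter_subset _ _))
    rw [card_erase_of_mem hu, G.card_neighborFinset_eq_degree] at *
    omega
  refine (qMat_isHermitian G).le_maxEig hx ?_
  rw [hdot, hdot, mul_sum]
  refine sum_le_sum fun u hu => ?_
  simp only [qMat_mulVec_apply, x, if_pos hu, mul_one, sum_boole]
  exact_mod_cast hrow u hu

end SignlessLaplacian

lemma Fin.card_filter_le_val {n m : ℕ} : #{i : Fin n | m ≤ (i : ℕ)} = n - m := by
  have := card_filter_add_card_filter_not (s := (univ : Finset (Fin n))) (fun i => (i : ℕ) < m)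
  simp only [not_lt, Fin.card_filter_val_lt, card_univ, Fintype.card_fin] at this
  omega

section ModelB

variable {n s a : ℕ}

lemma modelB_adj {u w : Fin n} : (modelB n s a).Adj u w ↔ u ≠ w ∧
    (((u : ℕ) < s ∧ ¬ (w : ℕ) < s) ∨ ((w : ℕ) < s ∧ ¬ (u : ℕ) < s) ∨
      (s + a ≤ (u : ℕ) ∧ s + a ≤ (w : ℕ))) :=
  Iff.rfl

lemma modelB_exists_isClique (hs : 0 < s) (hn : s + a ≤ n) :
    ∃ S : Finset (Fin n), (modelB n s a).IsClique (S : Set (Fin n)) ∧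
      #S = n - (s + a) + 1 := by
  refine ⟨({w | (w : ℕ) < 1 ∨ s + a ≤ (w : ℕ)} : Finset (Fin n)),
    fun u hu w hw huw => ?_, ?_⟩
  · simp only [coe_filter, mem_univ, true_and, Set.mem_ofPred_eq] at hu hw
    have := Fin.val_ne_of_ne huw
    exact modelB_adj.2 ⟨huw, by omega⟩
  · rw [filter_or, card_union_of_disjoint (disjoint_filter.2 fun w _ h => by omega),
      Fin.card_filter_val_lt, Fin.card_filter_le_val]
    omega

variable [DecidableRel (modelB n s a).Adj]

lemma modelB_degree_of_lt {u : Fin n} (hu : (u : ℕ) < s) :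
    (modelB n s a).degree u = n - s := by
  have : (modelB n s a).neighborFinset u = ({w | s ≤ (w : ℕ)} : Finset (Fin n)) := by
    ext w
    simp only [SimpleGraph.mem_neighborFinset, modelB_adj, mem_filter, mem_univ, true_and, ne_eq,
      Fin.ext_iff]
    omega
  rw [← SimpleGraph.card_neighborFinset_eq_degree, this, Fin.card_filter_le_val]

lemma modelB_degree_of_le_of_lt {u : Fin n} (hsu : s ≤ (u : ℕ)) (hu : (u : ℕ) < s + a) :
    (modelB n s a).degree u = s := by
  have : (modelB n s a).neighborFinset u = ({w | (w : ℕ) < s} : Finset (Fin n)) := by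
    ext w
    simp only [SimpleGraph.mem_neighborFinset, modelB_adj, mem_filter, mem_univ, true_and, ne_eq,
      Fin.ext_iff]
    omega
  rw [← SimpleGraph.card_neighborFinset_eq_degree, this, Fin.card_filter_val_lt]
  have := u.isLt
  omega

lemma modelB_degree_of_le {u : Fin n} (hu : s + a ≤ (u : ℕ)) :
    (modelB n s a).degree u = n - a - 1 := by
  have : (modelB n s a).neighborFinset u =
      ({w | (w : ℕ) < s ∨ s + a ≤ (w : ℕ)} : Finset (Fin n)).erase u := by
    ext w
    simp only [SimpleGraph.mem_neighborFinset, modelB_adj, mem_erase, mem_filter, mem_univ,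
      true_and, ne_eq, Fin.ext_iff]
    omega
  rw [← SimpleGraph.card_neighborFinset_eq_degree, this, card_erase_of_mem (by simp [hu]),
    filter_or, card_union_of_disjoint (disjoint_filter.2 fun w _ h => by omega),
    Fin.card_filter_val_lt, Fin.card_filter_le_val]
  have := u.isLt
  omega

lemma modelB_degree_add_degree_le {C : ℕ} (hC₁ : n - s + s ≤ C)
    (hC₂ : n - s + (n - a - 1) ≤ C) (hC₃ : n - a - 1 + (n - a - 1) ≤ C) {u v : Fin n}
    (huv : (modelB n s a).Adj u v) :
    (modelB n s a).degree u + (modelB n s a).degree v ≤ C := by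
  have hlo {u v : Fin n} (hu : (u : ℕ) < s) (hv : s ≤ (v : ℕ)) :
      (modelB n s a).degree u + (modelB n s a).degree v ≤ C := by
    rw [modelB_degree_of_lt hu]
    rcases lt_or_ge (v : ℕ) (s + a) with hva | hva
    · rwa [modelB_degree_of_le_of_lt hv hva]
    · rwa [modelB_degree_of_le hva]
  rcases modelB_adj.1 huv with ⟨-, ⟨hu, hv⟩ | ⟨hv, hu⟩ | ⟨hu, hv⟩⟩
  · exact hlo hu (not_lt.1 hv)
  · rw [add_comm]
    exact hlo hv (not_lt.1 hu)
  · rwa [modelB_degree_of_le hu, modelB_degree_of_le hv]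

end ModelB

theorem stmt_13_general (n s k : ℕ)
    (h1 : 2 * k + 4 ≤ n) (h2 : (k + 1) * s + 1 ≤ n) (hs1 : 1 < s) :
    qRad (modelB n s (k * s + 1)) ≤ qRad (modelB n 1 (k + 1)) := by
  classical
  have hks : k * 2 ≤ k * s := Nat.mul_le_mul_left k hs1
  have hn : k * s + s + 1 ≤ n := add_one_mul k s ▸ h2
  obtain ⟨S, hS, hcard⟩ := modelB_exists_isClique (n := n) (a := k + 1) one_pos (by omega)
  refine (qRad_le_of_degree_add_degree_le _ fun u v huv => ?_).trans
    (two_mul_card_sub_one_le_qRad _ hS (card_pos.1 (by omega)))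
  refine modelB_degree_add_degree_le ?_ ?_ ?_ huv <;> rw [hcard] <;> omega

/-- Lemma: for `k ≥ 2`, `n ≥ 2k + 4`, `n ≥ (k+1)s + 1` and `s > 1`,
`q(sK_1 ∨ ((ks+1)K_1 ∪ K_{n-(k+1)s-1})) ≤ q(K_1 ∨ ((k+1)K_1 ∪ K_{n-k-2}))`. -/
theorem stmt_13 (n s k : ℕ) (hk : 2 ≤ k) (hs : 1 ≤ s)
    (h1 : 2 * k + 4 ≤ n) (h2 : (k + 1) * s + 1 ≤ n) (hs1 : 1 < s) :
    qRad (modelB n s (k * s + 1)) ≤ qRad (modelB n 1 (k + 1)) :=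
  stmt_13_general n s k h1 h2 hs1
end
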